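/- Write vectors in R^11 as c = (c_0; c_{f_1},…,c_{f_5}; c_{g_1},…,c_{g_5}) and d = (d_0; d_{F_1},…,d_{F_5}; d_{G_1},…,d_{G_5}), and define the bilinear pairing P(c,d) = c_0 d_0 − Σ_{i=1}^{5} (c_{f_i} d_{G_i} + c_{g_i} d_{F_i}) + 4 Σ_{i=1}^{5} c_{g_i} d_{G_i}. Let S ⊂ R^11 be the set of all vectors obtained by permuting the indices {1,…,5} in: (0; 1,0,0,0,0; 0,0,0,0,0), (0; 2,0,0,0,0; 1,0,0,0,0), (1; 0,0,0,0,0; 0,0,0,0,0), (1; −1,−1,−1,−1,0; 0,0,0,0,0), (1; −3,−1,0,0,0; −1,0,0,0,0). Then each of the following vectors, and every index-permutation thereof, satisfies P(s, d) ≥ 0 for all s ∈ S: d = (1; −2,0,0,0,0; −1,0,0,0,0), (1; −1,−1,−1,−1,−1; 0,0,0,0,0), (2; −2,−2,−1,−1,−1; −1,−1,0,0,0), (3; −3,−3,−3,−2,−2; −1,−1,−1,0,0), (4; −4,−4,−4,−4,−4; −1,−1,−1,−1,−1). -/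

import Mathlib

/-- Numerical classes of 2-cycles (resp. codimension-2 classes) on the blowup of
P^5 along 5 general lines, written as vectors `(c₀; c_{f₁},…,c_{f₅}; c_{g₁},…,c_{g₅})`
(resp. `(d₀; d_{F₁},…,d_{F₅}; d_{G₁},…,d_{G₅})`). -/
abbrev Vec11 : Type := ℝ × (Fin 5 → ℝ) × (Fin 5 → ℝ)

/-- The intersection pairing
`P(c,d) = c₀ d₀ − Σᵢ (c_{fᵢ} d_{Gᵢ} + c_{gᵢ} d_{Fᵢ}) + 4 Σᵢ c_{gᵢ} d_{Gᵢ}`. -/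
def interPair11 (c d : Vec11) : ℝ :=
  c.1 * d.1 - (∑ i : Fin 5, (c.2.1 i * d.2.2 i + c.2.2 i * d.2.1 i))
    + 4 * ∑ i : Fin 5, c.2.2 i * d.2.2 i

/-- The action of a permutation of the indices `{1,…,5}` on a vector. -/
def permVec11 (σ : Equiv.Perm (Fin 5)) (v : Vec11) : Vec11 :=
  (v.1, v.2.1 ∘ σ, v.2.2 ∘ σ)

/-- The classes of linear 2-dimensional subvarieties: all index-permutations of the
five listed vectors. -/
def linClasses11 : Set Vec11 :=
  {w | ∃ σ : Equiv.Perm (Fin 5), w = permVec11 σ (0, ![1,0,0,0,0], ![0,0,0,0,0]) ∨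
    w = permVec11 σ (0, ![2,0,0,0,0], ![1,0,0,0,0]) ∨
    w = permVec11 σ (1, ![0,0,0,0,0], ![0,0,0,0,0]) ∨
    w = permVec11 σ (1, ![-1,-1,-1,-1,0], ![0,0,0,0,0]) ∨
    w = permVec11 σ (1, ![-3,-1,0,0,0], ![-1,0,0,0,0])}

/-- The maximally incident generators α, β, γ, δ, ε, together with all their
index-permutations. -/
def maxIncident11 : Set Vec11 :=
  {w | ∃ σ : Equiv.Perm (Fin 5), w = permVec11 σ (1, ![-2,0,0,0,0], ![-1,0,0,0,0]) ∨
    w = permVec11 σ (1, ![-1,-1,-1,-1,-1], ![0,0,0,0,0]) ∨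
    w = permVec11 σ (2, ![-2,-2,-1,-1,-1], ![-1,-1,0,0,0]) ∨
    w = permVec11 σ (3, ![-3,-3,-3,-2,-2], ![-1,-1,-1,0,0]) ∨
    w = permVec11 σ (4, ![-4,-4,-4,-4,-4], ![-1,-1,-1,-1,-1])}

/-! The pairing is invariant under permuting the indices of both arguments at once, so
pairing a permuted linear class with `d` is pairing the unpermuted class with a permuted `d`.
The pairings of the five base linear classes with `d` are five families of linear
inequalities in `d`, stable under permutations, and each of α, β, γ, δ, ε satisfies them. -/

section Perm

variable (σ : Equiv.Perm (Fin 5))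

lemma permVec11_permVec11_symm (d : Vec11) : permVec11 σ (permVec11 σ.symm d) = d := by
  ext <;> simp [permVec11]

lemma interPair11_permVec11 (c d : Vec11) :
    interPair11 (permVec11 σ c) (permVec11 σ d) = interPair11 c d := by
  simp only [interPair11, permVec11, Function.comp_apply]
  rw [Equiv.sum_comp σ (fun i => c.2.1 i * d.2.2 i + c.2.2 i * d.2.1 i),
    Equiv.sum_comp σ (fun i => c.2.2 i * d.2.2 i)]

lemma interPair11_permVec11_left (c d : Vec11) :
    interPair11 (permVec11 σ c) d = interPair11 c (permVec11 σ.symm d) := by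
  conv_lhs => rw [← permVec11_permVec11_symm σ d]
  exact interPair11_permVec11 σ c _

end Perm

/-- Nonnegativity of the pairing of `d` with, in turn, a fibre `fᵢ`, a ruling `2fᵢ + gᵢ`,
a general plane `H³`, a plane meeting all lines but `L_m`, and a plane containing `L_j`
and meeting `L_k`. -/
structure SatisfiesLinIneqs (d : Vec11) : Prop where
  fibre : ∀ i, d.2.2 i ≤ 0
  ruling : ∀ i, d.2.1 i ≤ 2 * d.2.2 i
  plane : 0 ≤ d.1
  plane_meeting_four : ∀ m, d.2.2 m ≤ d.1 + ∑ i, d.2.2 i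
  plane_through_line : ∀ j k, j ≠ k → d.2.2 j ≤ d.1 + d.2.2 k + d.2.1 j

namespace SatisfiesLinIneqs

variable {d : Vec11}

lemma perm (hd : SatisfiesLinIneqs d) (σ : Equiv.Perm (Fin 5)) :
    SatisfiesLinIneqs (permVec11 σ d) where
  fibre i := hd.fibre (σ i)
  ruling i := hd.ruling (σ i)
  plane := hd.plane
  plane_meeting_four m := by
    simpa only [permVec11, Function.comp_apply, Equiv.sum_comp σ d.2.2]
      using hd.plane_meeting_four (σ m)
  plane_through_line j k hjk := hd.plane_through_line (σ j) (σ k) (σ.injective.ne hjk)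

lemma interPair11_nonneg (hd : SatisfiesLinIneqs d) :
    ∀ s ∈ linClasses11, 0 ≤ interPair11 s d := by
  rintro s ⟨τ, rfl | rfl | rfl | rfl | rfl⟩ <;> rw [interPair11_permVec11_left] <;>
    obtain ⟨fibre, ruling, plane, plane_meeting_four, plane_through_line⟩ := hd.perm τ.symm <;>
    generalize permVec11 τ.symm d = e at * <;>
    simp only [interPair11, Fin.sum_univ_five, Matrix.cons_val_zero, Matrix.cons_val_one,
      Matrix.cons_val_two, Matrix.cons_val_three, Matrix.cons_val_four, Matrix.head_cons,
      Matrix.tail_cons] at *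
  · linarith [fibre 0]
  · linarith [ruling 0]
  · linarith
  · linarith [plane_meeting_four 4]
  · linarith [plane_through_line 0 1 (by decide)]

end SatisfiesLinIneqs

lemma satisfiesLinIneqs_maxIncident_generators :
    SatisfiesLinIneqs (1, ![-2,0,0,0,0], ![-1,0,0,0,0]) ∧
    SatisfiesLinIneqs (1, ![-1,-1,-1,-1,-1], ![0,0,0,0,0]) ∧
    SatisfiesLinIneqs (2, ![-2,-2,-1,-1,-1], ![-1,-1,0,0,0]) ∧
    SatisfiesLinIneqs (3, ![-3,-3,-3,-2,-2], ![-1,-1,-1,0,0]) ∧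
    SatisfiesLinIneqs (4, ![-4,-4,-4,-4,-4], ![-1,-1,-1,-1,-1]) := by
  refine ⟨?_, ?_, ?_, ?_, ?_⟩ <;> constructor <;>
    simp [Fin.forall_fin_succ, Fin.sum_univ_five] <;> norm_num

/-- Each of the classes α, β, γ, δ, ε (and every index-permutation thereof) pairs
non-negatively with every class of a linear 2-dimensional subvariety, i.e. lies in
the dual of the linear cone of 2-cycles on the blowup of P^5 along 5 general
lines. -/
theorem stmt15 :
    ∀ d ∈ maxIncident11, ∀ s ∈ linClasses11, 0 ≤ interPair11 s d := by
  obtain ⟨hα, hβ, hγ, hδ, hε⟩ := satisfiesLinIneqs_maxIncident_generators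
  rintro d ⟨σ, rfl | rfl | rfl | rfl | rfl⟩
  exacts [(hα.perm σ).interPair11_nonneg, (hβ.perm σ).interPair11_nonneg,
    (hγ.perm σ).interPair11_nonneg, (hδ.perm σ).interPair11_nonneg,
    (hε.perm σ).interPair11_nonneg]
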